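/- Fix reals u < 0 and a < 0 with u ≠ a, and for β > 0 define G_{a,β}(u) := log((1+e^{βu})/(1+e^{βa})) + e^{βa}·log((1+e^{−βu})/(1+e^{−βa})). Then lim_{β→∞} G_{a,β}(u) / [e^{βa}(e^{β(u−a)} − 1 − β(u−a))] = 1. In particular G_{a,β}(u) decreases exponentially fast in β in this regime. -/

import Mathlib

open scoped BigOperators Topology Classical
open Real MeasureTheory Filter

/-!
With `x = e^{βu}`, `y = e^{βa}` and `s = β(u-a)`, the identity `1 + e^{-t} = e^{-t}(1 + e^t)` gives
`G = (1+y) log((1+x)/(1+y)) - s y`, while the denominator is `D = x - y - s y`. Hence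
`G - D = (1+y) log((1+x)/(1+y)) - (x-y)`, which is `O(max(x,y)²)` because `log(1+t) = t + O(t²)`.
On the other hand `D = y (e^s - 1 - s) ≥ max(x,y)/2` as soon as `|s| ≥ 3`, so
`|G/D - 1| ≤ 4 max(x,y) → 0`.
-/

/-- The function `G_a(u) = log((1+e^{βu})/(1+e^{βa})) + e^{βa}·log((1+e^{-βu})/(1+e^{-βa}))`. -/
noncomputable def Gfun (β a u : ℝ) : ℝ :=
  Real.log ((1 + Real.exp (β * u)) / (1 + Real.exp (β * a)))
    + Real.exp (β * a) * Real.log ((1 + Real.exp (-(β * u))) / (1 + Real.exp (-(β * a))))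

namespace Real

lemma sub_log_one_add_nonneg {t : ℝ} (ht : 0 ≤ t) : 0 ≤ t - log (1 + t) := by
  linarith [log_le_sub_one_of_pos (show 0 < 1 + t by linarith)]

lemma sub_log_one_add_le {t : ℝ} (ht : 0 ≤ t) : t - log (1 + t) ≤ t ^ 2 / 2 := by
  have h := le_log_one_add_of_nonneg ht
  have : t - 2 * t / (t + 2) ≤ t ^ 2 / 2 := by
    rw [sub_le_comm, le_div_iff₀ (by positivity)]
    nlinarith [pow_nonneg ht 3]
  linarith

lemma abs_one_add_mul_log_div_sub_le {x y : ℝ} (hx : 0 ≤ x) (hy : 0 ≤ y) (hy₁ : y ≤ 1) :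
    |(1 + y) * log ((1 + x) / (1 + y)) - (x - y)| ≤ 2 * max x y ^ 2 := by
  have hxM : x ≤ max x y := le_max_left x y
  have hyM : y ≤ max x y := le_max_right x y
  have hfx₀ := sub_log_one_add_nonneg hx
  have hfx := sub_log_one_add_le hx
  have hfy₀ := sub_log_one_add_nonneg hy
  have hfy := sub_log_one_add_le hy
  rw [log_div (by positivity) (by positivity), abs_le]
  constructor <;>
    nlinarith [mul_le_mul hyM hxM hx (by positivity), mul_le_mul hxM hxM hx (by positivity),
      mul_le_mul hyM hyM hy (by positivity)]

lemma one_add_exp_neg_div_one_add_exp_neg (s t : ℝ) :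
    (1 + exp (-s)) / (1 + exp (-t)) = exp (t - s) * ((1 + exp s) / (1 + exp t)) := by
  rw [exp_sub, exp_neg, exp_neg]
  field_simp
  ring

lemma max_exp_one_le_two_mul {s : ℝ} (hs : 3 ≤ |s|) : max (exp s) 1 ≤ 2 * (exp s - 1 - s) := by
  rcases le_abs'.1 hs with hs | hs
  · rw [max_eq_right (exp_le_one_iff.2 (by linarith))]
    linarith [exp_pos s]
  · rw [max_eq_left (one_le_exp (by linarith))]
    nlinarith [quadratic_le_exp_of_nonneg (show 0 ≤ s by linarith)]

end Real

lemma Gfun_eq (β a u : ℝ) :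
    Gfun β a u = (1 + exp (β * a)) * log ((1 + exp (β * u)) / (1 + exp (β * a)))
      + β * (a - u) * exp (β * a) := by
  rw [Gfun, one_add_exp_neg_div_one_add_exp_neg, log_mul (exp_ne_zero _) (by positivity),
    log_exp]
  ring

lemma abs_Gfun_div_sub_one_le {β a u : ℝ} (ha : β * a ≤ 0) (hs : 3 ≤ |β * (u - a)|) :
    |Gfun β a u / (exp (β * a) * (exp (β * (u - a)) - 1 - β * (u - a))) - 1|
      ≤ 4 * max (exp (β * u)) (exp (β * a)) := by
  set D := exp (β * a) * (exp (β * (u - a)) - 1 - β * (u - a))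
  set M := max (exp (β * u)) (exp (β * a))
  have hM : M = exp (β * a) * max (exp (β * (u - a))) 1 := by
    rw [mul_max_of_nonneg _ _ (exp_pos _).le, ← exp_add, mul_one, ← mul_add,
      add_sub_cancel]
  have hMD : M ≤ 2 * D := by
    rw [hM]
    nlinarith [max_exp_one_le_two_mul hs, exp_pos (β * a)]
  have hM₀ : 0 < M := lt_max_of_lt_left (exp_pos _)
  have hGD : Gfun β a u - D = (1 + exp (β * a)) * log ((1 + exp (β * u)) / (1 + exp (β * a)))
      - (exp (β * u) - exp (β * a)) := by
    rw [Gfun_eq]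
    simp only [D, mul_sub, ← exp_add]
    ring_nf
  have hGD_le : |Gfun β a u - D| ≤ 2 * M ^ 2 := by
    rw [hGD]
    exact abs_one_add_mul_log_div_sub_le (exp_pos _).le (exp_pos _).le (exp_le_one_iff.2 ha)
  have hD₀ : 0 < D := by linarith
  rw [div_sub_one hD₀.ne', abs_div, abs_of_pos hD₀, div_le_iff₀ hD₀]
  nlinarith

/-- For fixed `u < 0`, `a < 0`, `u ≠ a`,
`G_{a,β}(u) / (e^{βa}(e^{β(u-a)} - 1 - β(u-a))) → 1` as `β → ∞`. -/
theorem stmt_10 (u a : ℝ) (hu : u < 0) (ha : a < 0) (hne : u ≠ a) :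
    Filter.Tendsto
      (fun β : ℝ => Gfun β a u /
        (Real.exp (β * a) * (Real.exp (β * (u - a)) - 1 - β * (u - a))))
      Filter.atTop (𝓝 1) := by
  have hexp {c : ℝ} (hc : c < 0) : Tendsto (fun β : ℝ => exp (β * c)) atTop (𝓝 0) :=
    tendsto_exp_atBot.comp (tendsto_id.atTop_mul_const_of_neg hc)
  have hmax : Tendsto (fun β : ℝ => 4 * max (exp (β * u)) (exp (β * a))) atTop (𝓝 0) := by
    simpa using ((hexp hu).max (hexp ha)).const_mul 4
  have hscale : ∀ᶠ β : ℝ in atTop, 3 ≤ |β * (u - a)| := by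
    have := tendsto_abs_atTop_atTop.atTop_mul_const (abs_pos.2 (sub_ne_zero.2 hne))
    simpa only [abs_mul] using this.eventually_ge_atTop 3
  rw [← tendsto_sub_nhds_zero_iff]
  refine squeeze_zero_norm' ?_ hmax
  filter_upwards [hscale, eventually_ge_atTop 0] with β hs hβ
  exact abs_Gfun_div_sub_one_le (mul_nonpos_of_nonneg_of_nonpos hβ ha.le) hs
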